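/- arXiv:2002.11721 — 2 statements merged into one kernel-verified Lean document; each statement's English description precedes it below -/
import Mathlib

section
/- If a graph G is a subgraph of H ⊠ P ⊠ K_ℓ for some graph H of treewidth at most k and some path P, then G is a subgraph of H' ⊠ P for some graph H' of treewidth at most (k+1)ℓ − 1. -/
open SimpleGraph Set

/-- A layering of a graph: an ordered partition `(L 0, L 1, …)` of the vertex set
such that every edge joins vertices in the same or consecutive layers. -/
def IsLayering {α : Type} (G : SimpleGraph α) (L : ℕ → Set α) : Prop :=
  (∀ v, ∃! i, v ∈ L i) ∧
  ∀ ⦃v w : α⦄, G.Adj v w → ∀ ⦃i j : ℕ⦄, v ∈ L i → w ∈ L j → i ≤ j + 1 ∧ j ≤ i + 1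

/-- A tree-decomposition of `G` with tree `tG` and bags `B`. -/
def IsTreeDecomp {α T : Type} (G : SimpleGraph α) (tG : SimpleGraph T) (B : T → Set α) : Prop :=
  tG.IsTree ∧
  (∀ v : α, (tG.induce {x | v ∈ B x}).Connected) ∧
  (∀ ⦃v w : α⦄, G.Adj v w → ∃ x, v ∈ B x ∧ w ∈ B x)

/-- `G` has treewidth (strictly) less than `k`: a tree-decomposition with bags of size at most `k`. -/
def TreewidthLT {α : Type} (G : SimpleGraph α) (k : ℕ) : Prop :=
  ∃ (T : Type) (tG : SimpleGraph T) (B : T → Set α),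
    IsTreeDecomp G tG B ∧ ∀ x, (B x).encard ≤ k

/-- `G` has treewidth at most `t`. -/
def TreewidthAtMost {α : Type} (G : SimpleGraph α) (t : ℕ) : Prop :=
  TreewidthLT G (t + 1)

/-- Maximum degree at most `Δ`. -/
def MaxDegreeLE {α : Type} (G : SimpleGraph α) (Δ : ℕ) : Prop :=
  ∀ v, (G.neighborSet v).encard ≤ Δ

/-- A colouring `f` has clustering at most `s`: every monochromatic component
(the set of vertices joined to `v` by a monochromatic walk) has at most `s` vertices. -/
def HasClustering {α β : Type} (G : SimpleGraph α) (f : α → β) (s : ℕ) : Prop :=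
  ∀ v : α, {w | ∃ p : G.Walk v w, ∀ u ∈ p.support, f u = f v}.encard ≤ s

/-- Quotient graph of a graph by an indexed partition. -/
def QuotGraph {α ι : Type} (G : SimpleGraph α) (P : ι → Set α) : SimpleGraph ι where
  Adj x y := x ≠ y ∧ ∃ v w, v ∈ P x ∧ w ∈ P y ∧ G.Adj v w
  symm := by refine ⟨?_⟩; rintro x y ⟨h, v, w, hv, hw, hvw⟩; exact ⟨h.symm, w, v, hw, hv, hvw.symm⟩
  loopless := by refine ⟨?_⟩; rintro x ⟨h, _⟩; exact h rfl

/-- The strong product of two graphs. -/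
def StrongProd {α β : Type} (A : SimpleGraph α) (B : SimpleGraph β) : SimpleGraph (α × β) where
  Adj x y := x ≠ y ∧ (x.1 = y.1 ∨ A.Adj x.1 y.1) ∧ (x.2 = y.2 ∨ B.Adj x.2 y.2)
  symm := by
    refine ⟨?_⟩
    rintro x y ⟨h, h1, h2⟩
    exact ⟨h.symm, h1.imp Eq.symm Adj.symm, h2.imp Eq.symm Adj.symm⟩
  loopless := by refine ⟨?_⟩; rintro x ⟨h, _⟩; exact h rfl

/-- The one-way infinite path on `ℕ`. -/
def NatPath : SimpleGraph ℕ where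
  Adj i j := j = i + 1 ∨ i = j + 1
  symm := by refine ⟨?_⟩; rintro i j (h | h); exacts [Or.inr h, Or.inl h]
  loopless := by refine ⟨?_⟩; rintro i (h | h) <;> omega

/-- The `p`-th power of a graph: join vertices at distance between 1 and `p`. -/
def PowerGraph {α : Type} (G : SimpleGraph α) (p : ℕ) : SimpleGraph α where
  Adj v w := v ≠ w ∧ ∃ q : G.Walk v w, q.length ≤ p
  symm := by refine ⟨?_⟩; rintro v w ⟨h, q, hq⟩; exact ⟨h.symm, q.reverse, by simpa using hq⟩
  loopless := by refine ⟨?_⟩; rintro v ⟨h, _⟩; exact h rfl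

/-- `G` has layered treewidth at most `k`. -/
def LayeredTreewidthLE {α : Type} (G : SimpleGraph α) (k : ℕ) : Prop :=
  ∃ (T : Type) (tG : SimpleGraph T) (B : T → Set α) (L : ℕ → Set α),
    IsTreeDecomp G tG B ∧ IsLayering G L ∧ ∀ x i, (B x ∩ L i).encard ≤ k

/-- An `H`-partition of `G`: parts indexed by vertices of `H` such that every edge of `G`
lies within a part or between parts adjacent in `H`. -/
def IsGraphPartition {α ι : Type} (G : SimpleGraph α) (H : SimpleGraph ι) (A : ι → Set α) : Prop :=
  (∀ v, ∃! x, v ∈ A x) ∧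
  ∀ ⦃v w : α⦄, G.Adj v w → ∀ ⦃x y : ι⦄, v ∈ A x → w ∈ A y → x = y ∨ H.Adj x y

/-- A `(k,ℓ)`-partition: a partition into nonempty parts whose quotient has treewidth at
most `k`, having layered width at most `ℓ` with respect to some layering. -/
def HasKLPartition {α : Type} (G : SimpleGraph α) (k ℓ : ℕ) : Prop :=
  ∃ (ι : Type) (P : ι → Set α),
    (∀ v, ∃! x, v ∈ P x) ∧ (∀ x, (P x).Nonempty) ∧
    TreewidthAtMost (QuotGraph G P) k ∧
    ∃ L, IsLayering G L ∧ ∀ x i, (P x ∩ L i).encard ≤ ℓ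


/-! Take `H' := H ⊠ K_ℓ`. Replacing every bag `B` of a tree-decomposition of `H` by `B × K_ℓ`
gives a tree-decomposition of `H ⊠ K_ℓ` with bags of size at most `(k + 1) ℓ`, and
`H ⊠ (P ⊠ K_ℓ) ≅ (H ⊠ K_ℓ) ⊠ P` transports the embedding of `G`. -/

section StrongProd

variable {α β γ : Type}

lemma StrongProd.adj_iff {A : SimpleGraph α} {B : SimpleGraph β} {x y : α × β} :
    (StrongProd A B).Adj x y ↔
      x ≠ y ∧ (x.1 = y.1 ∨ A.Adj x.1 y.1) ∧ (x.2 = y.2 ∨ B.Adj x.2 y.2) :=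
  Iff.rfl

def StrongProd.rightCommIso (A : SimpleGraph α) (B : SimpleGraph β) (C : SimpleGraph γ) :
    StrongProd A (StrongProd B C) ≃g StrongProd (StrongProd A C) B where
  toFun x := ((x.1, x.2.2), x.2.1)
  invFun y := (y.1.1, (y.2, y.1.2))
  left_inv _ := rfl
  right_inv _ := rfl
  map_rel_iff' := by
    rintro ⟨a, b, c⟩ ⟨a', b', c'⟩
    simp only [Equiv.coe_fn_mk, StrongProd.adj_iff, ne_eq, Prod.mk.injEq]
    tauto

end StrongProd

lemma IsTreeDecomp.strongProd {α β T : Type} {G : SimpleGraph α} {tG : SimpleGraph T}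
    {B : T → Set α} (hB : IsTreeDecomp G tG B) (K : SimpleGraph β) :
    IsTreeDecomp (StrongProd G K) tG (fun x => B x ×ˢ univ) := by
  obtain ⟨htree, hconn, hedge⟩ := hB
  refine ⟨htree, fun p => ?_, ?_⟩
  · have hbags : {x | p ∈ B x ×ˢ (univ : Set β)} = {x | p.1 ∈ B x} := by
      ext x; simp only [mem_ofPred_eq, mem_prod, mem_univ, and_true]
    exact hbags ▸ hconn p.1
  rintro p q ⟨-, hpq | hpq, -⟩
  · obtain ⟨⟨x, hx⟩⟩ := (hconn p.1).nonempty
    exact ⟨x, ⟨hx, trivial⟩, ⟨hpq ▸ hx, trivial⟩⟩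
  · obtain ⟨x, hp, hq⟩ := hedge hpq
    exact ⟨x, ⟨hp, trivial⟩, ⟨hq, trivial⟩⟩

lemma TreewidthLT.strongProd {α β : Type} [Finite β] {G : SimpleGraph α} {k : ℕ}
    (hG : TreewidthLT G k) (K : SimpleGraph β) :
    TreewidthLT (StrongProd G K) (k * Nat.card β) := by
  obtain ⟨T, tG, B, hB, hsize⟩ := hG
  refine ⟨T, tG, _, hB.strongProd K, fun x => ?_⟩
  rw [encard_prod, encard_univ, ENat.card_eq_coe_natCard, Nat.cast_mul]
  exact mul_le_mul_left (hsize x) _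

lemma TreewidthLT.mono {α : Type} {G : SimpleGraph α} {k m : ℕ} (hG : TreewidthLT G k)
    (hkm : k ≤ m) : TreewidthLT G m := by
  obtain ⟨T, tG, B, hB, hsize⟩ := hG
  exact ⟨T, tG, B, hB, fun x => (hsize x).trans (by exact_mod_cast hkm)⟩

/-- If `G ⊆ H ⊠ P ⊠ K_ℓ` with `H` of treewidth at most `k` and `P` a path, then
`G ⊆ H' ⊠ P` for some graph `H'` of treewidth at most `(k+1)ℓ − 1`. -/
theorem stmt6 {α ι : Type} (G : SimpleGraph α) (H : SimpleGraph ι) (k ℓ : ℕ)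
    (hH : TreewidthAtMost H k)
    (φ : α → ι × ℕ × Fin ℓ) (hinj : Function.Injective φ)
    (hadj : ∀ ⦃v w⦄, G.Adj v w →
      (StrongProd H (StrongProd NatPath (completeGraph (Fin ℓ)))).Adj (φ v) (φ w)) :
    ∃ (κ : Type) (H' : SimpleGraph κ), TreewidthAtMost H' ((k + 1) * ℓ - 1) ∧
      ∃ ψ : α → κ × ℕ, Function.Injective ψ ∧
        ∀ ⦃v w⦄, G.Adj v w → (StrongProd H' NatPath).Adj (ψ v) (ψ w) := by
  let e := StrongProd.rightCommIso H NatPath (completeGraph (Fin ℓ))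
  refine ⟨ι × Fin ℓ, StrongProd H (completeGraph (Fin ℓ)), ?_, e ∘ φ, e.injective.comp hinj,
    fun v w hvw => e.map_adj_iff.mpr (hadj hvw)⟩
  have hH' := hH.strongProd (completeGraph (Fin ℓ))
  rw [Nat.card_eq_fintype_card, Fintype.card_fin] at hH'
  -- `mono` absorbs the truncated subtraction when `ℓ = 0`
  exact hH'.mono (by omega)
end

section
/- If a graph G has a (k,ℓ)-partition, then G has layered treewidth at most (k+1)ℓ. -/
open SimpleGraph Set

/-! Take a tree-decomposition of the quotient graph `G/P` of width at most `k` and replace every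
part in every bag by its vertices. This is a tree-decomposition of `G`, and a bag, being the union
of at most `k + 1` parts, meets each layer in at most `(k + 1)ℓ` vertices. -/

theorem Set.Finite.encard_biUnion_le_encard_mul {ι β : Type*} {t : Set ι} (ht : t.Finite)
    (s : ι → Set β) {m : ℕ∞} (hs : ∀ i ∈ t, (s i).encard ≤ m) :
    (⋃ i ∈ t, s i).encard ≤ t.encard * m := by
  classical
  calc (⋃ i ∈ t, s i).encard ≤ ∑ i ∈ ht.toFinset, (s i).encard := by
        simpa using ht.toFinset.set_encard_biUnion_le s
    _ ≤ ht.toFinset.card • m := Finset.sum_le_card_nsmul _ _ _ (by simpa using hs)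
    _ = t.encard * m := by rw [nsmul_eq_mul, ht.encard_eq_coe_toFinset_card]

theorem isGraphPartition_quotGraph {α ι : Type} {G : SimpleGraph α} {P : ι → Set α}
    (hP : ∀ v, ∃! x, v ∈ P x) : IsGraphPartition G (QuotGraph G P) P :=
  ⟨hP, fun v w hvw _ _ hx hy => or_iff_not_imp_left.2 fun hxy => ⟨hxy, v, w, hx, hy, hvw⟩⟩

theorem IsTreeDecomp.biUnion_of_isGraphPartition {α ι T : Type} {G : SimpleGraph α}
    {H : SimpleGraph ι} {tG : SimpleGraph T} {P : ι → Set α} {B : T → Set ι}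
    (hB : IsTreeDecomp H tG B) (hP : IsGraphPartition G H P) :
    IsTreeDecomp G tG fun t => ⋃ x ∈ B t, P x := by
  obtain ⟨htree, hconn, hedge⟩ := hB
  refine ⟨htree, fun v => ?_, fun v w hvw => ?_⟩
  · obtain ⟨x, hx, hx_unique⟩ := hP.1 v
    have hbags : {t | v ∈ ⋃ y ∈ B t, P y} = {t | x ∈ B t} := by
      ext t
      simp only [mem_ofPred, mem_iUnion₂]
      exact ⟨fun ⟨y, hy, hvy⟩ => hx_unique y hvy ▸ hy, fun ht => ⟨x, ht, hx⟩⟩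
    rw [hbags]
    exact hconn x
  · obtain ⟨x, hx, -⟩ := hP.1 v
    obtain ⟨y, hy, -⟩ := hP.1 w
    obtain ⟨t, hxt, hyt⟩ : ∃ t, x ∈ B t ∧ y ∈ B t := by
      rcases hP.2 hvw hx hy with rfl | hxy
      · obtain ⟨⟨t, ht⟩⟩ := (hconn x).nonempty
        exact ⟨t, ht, ht⟩
      · exact hedge hxy
    exact ⟨t, mem_biUnion hxt hx, mem_biUnion hyt hy⟩

/-- If a graph has a `(k,ℓ)`-partition, then it has layered treewidth at most
`(k+1)ℓ`. -/
theorem stmt7 {α : Type} (G : SimpleGraph α) (k ℓ : ℕ) (h : HasKLPartition G k ℓ) :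
    LayeredTreewidthLE G ((k + 1) * ℓ) := by
  obtain ⟨ι, P, hP, -, ⟨T, tG, B, hB, hbag⟩, L, hL, hPL⟩ := h
  refine ⟨T, tG, fun t => ⋃ x ∈ B t, P x, L,
    hB.biUnion_of_isGraphPartition (isGraphPartition_quotGraph hP), hL, fun t i => ?_⟩
  calc ((⋃ x ∈ B t, P x) ∩ L i).encard = (⋃ x ∈ B t, P x ∩ L i).encard := by
        rw [iUnion₂_inter]
    _ ≤ (B t).encard * ℓ :=
        (finite_of_encard_le_coe (hbag t)).encard_biUnion_le_encard_mul _ fun x _ => hPL x i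
    _ ≤ (k + 1 : ℕ) * ℓ := by gcongr; exact hbag t
    _ = ((k + 1) * ℓ : ℕ) := by push_cast; rfl
end
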